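/- Let U be a module over a unital bialgebra V = (V,·,Δ,1) (Δ an algebra map, not necessarily coassociative), let Φ ∈ V^{⊗3} be invertible, and let ∗: U⊗U → U be a V-module algebra product (v·(a∗b) = (v_(1)·a)∗(v_(2)·b)) satisfying Φ·(a∗(b∗c)) = (a∗b)∗c for all a,b,c ∈ U. Then for all a,b,c,d ∈ U one has ((a∗b)∗c)∗d = P(Φ)·(((a∗b)∗c)∗d), where P(Φ) = (Φ⊗1)⁻¹·((1⊗Δ⊗1)(Φ))⁻¹·(1⊗Φ)⁻¹·((1⊗1⊗Δ)(Φ))·((Δ⊗1⊗1)(Φ)) ∈ V^{⊗4} acts componentwise on the four tensor factors. -/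

import Mathlib

/-!
Both sides are compared with the right-bracketed product `a ∗ (b ∗ (c ∗ d))`, reached from
`((a ∗ b) ∗ c) ∗ d` along the two sides of Mac Lane's pentagon. Each rebracketing
`(x ∗ y) ∗ z ↦ x ∗ (y ∗ z)` costs an action of `Φ`, and the module-algebra property moves that
action past a product sitting in one of its slots, replacing the corresponding leg of `Φ` by its
image under `Δ`. The short side, through `(a ∗ b) ∗ (c ∗ d)`, produces the action of
`(1⊗1⊗Δ)(Φ) · (Δ⊗1⊗1)(Φ)`; the long side, through `(a ∗ (b ∗ c)) ∗ d` and `a ∗ ((b ∗ c) ∗ d)`,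
that of `(1⊗Φ) · (1⊗Δ⊗1)(Φ) · (Φ⊗1)`. Cancelling the invertible second element leaves `P(Φ)`.
-/

open scoped TensorProduct

noncomputable section

variable (k V U : Type*) [Field k] [CharZero k] [Ring V] [Algebra k V]
  [AddCommGroup U] [Module k U] [Module V U] [IsScalarTower k V U] [SMulCommClass k V U]

/-- `Φ ↦ Φ ⊗ 1 : V^⊗3 → V^⊗4`. -/
def tensorOne : V ⊗[k] (V ⊗[k] V) →ₐ[k] V ⊗[k] (V ⊗[k] (V ⊗[k] V)) :=
  Algebra.TensorProduct.map (AlgHom.id k V)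
    (Algebra.TensorProduct.map (AlgHom.id k V)
      (Algebra.TensorProduct.includeLeft : V →ₐ[k] V ⊗[k] V))

/-- `Φ ↦ 1 ⊗ Φ : V^⊗3 → V^⊗4`. -/
def oneTensor : V ⊗[k] (V ⊗[k] V) →ₐ[k] V ⊗[k] (V ⊗[k] (V ⊗[k] V)) :=
  Algebra.TensorProduct.includeRight

/-- `Δ ⊗ 1 ⊗ 1 : V^⊗3 → V^⊗4`. -/
def deltaFirst (Δ : V →ₐ[k] V ⊗[k] V) :
    V ⊗[k] (V ⊗[k] V) →ₐ[k] V ⊗[k] (V ⊗[k] (V ⊗[k] V)) :=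
  (Algebra.TensorProduct.assoc k k k V V (V ⊗[k] V)).toAlgHom.comp
    (Algebra.TensorProduct.map Δ (AlgHom.id k (V ⊗[k] V)))

/-- `1 ⊗ Δ ⊗ 1 : V^⊗3 → V^⊗4`. -/
def deltaSecond (Δ : V →ₐ[k] V ⊗[k] V) :
    V ⊗[k] (V ⊗[k] V) →ₐ[k] V ⊗[k] (V ⊗[k] (V ⊗[k] V)) :=
  Algebra.TensorProduct.map (AlgHom.id k V)
    ((Algebra.TensorProduct.assoc k k k V V V).toAlgHom.comp
      (Algebra.TensorProduct.map Δ (AlgHom.id k V)))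

/-- `1 ⊗ 1 ⊗ Δ : V^⊗3 → V^⊗4`. -/
def deltaThird (Δ : V →ₐ[k] V ⊗[k] V) :
    V ⊗[k] (V ⊗[k] V) →ₐ[k] V ⊗[k] (V ⊗[k] (V ⊗[k] V)) :=
  Algebra.TensorProduct.map (AlgHom.id k V)
    (Algebra.TensorProduct.map (AlgHom.id k V) Δ)

/-- The drinfeld element
`P(Φ) = (Φ⊗1)⁻¹·((1⊗Δ⊗1)Φ)⁻¹·(1⊗Φ)⁻¹·((1⊗1⊗Δ)Φ)·((Δ⊗1⊗1)Φ) ∈ V^⊗4`,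
for an invertible `Φ ∈ V^⊗3`. -/
def Pphi (Δ : V →ₐ[k] V ⊗[k] V) (Φ : (V ⊗[k] (V ⊗[k] V))ˣ) :
    (V ⊗[k] (V ⊗[k] (V ⊗[k] V)))ˣ :=
  (Units.map (tensorOne k V).toRingHom.toMonoidHom Φ)⁻¹ *
    (Units.map (deltaSecond k V Δ).toRingHom.toMonoidHom Φ)⁻¹ *
    (Units.map (oneTensor k V).toRingHom.toMonoidHom Φ)⁻¹ *
    Units.map (deltaThird k V Δ).toRingHom.toMonoidHom Φ *
    Units.map (deltaFirst k V Δ).toRingHom.toMonoidHom Φ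

/-- The `k`-linear action map `V → End_k(U)`, `v ↦ (v • ·)`. -/
def actV : V →ₗ[k] U →ₗ[k] U :=
  LinearMap.mk₂ k (fun v u => v • u) (fun v w u => add_smul v w u)
    (fun c v u => smul_assoc c v u) (fun v u w => smul_add v u w)
    (fun c v u => (smul_comm c v u).symm)

/-- Componentwise action of `V⊗V` on `U⊗U`. -/
def act2 : V ⊗[k] V →ₗ[k] U ⊗[k] U →ₗ[k] U ⊗[k] U :=
  (TensorProduct.homTensorHomMap (RingHom.id k) U U U U).comp (TensorProduct.map (actV k V U) (actV k V U))

/-- Componentwise action of `V^⊗3` on `U^⊗3`. -/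
def act3 : V ⊗[k] (V ⊗[k] V) →ₗ[k]
    U ⊗[k] (U ⊗[k] U) →ₗ[k] U ⊗[k] (U ⊗[k] U) :=
  (TensorProduct.homTensorHomMap (RingHom.id k) U (U ⊗[k] U) U (U ⊗[k] U)).comp
    (TensorProduct.map (actV k V U) (act2 k V U))

/-- Componentwise action of `V^⊗4` on `U^⊗4`. -/
def act4 : V ⊗[k] (V ⊗[k] (V ⊗[k] V)) →ₗ[k]
    U ⊗[k] (U ⊗[k] (U ⊗[k] U)) →ₗ[k] U ⊗[k] (U ⊗[k] (U ⊗[k] U)) :=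
  (TensorProduct.homTensorHomMap (RingHom.id k) U (U ⊗[k] (U ⊗[k] U)) U (U ⊗[k] (U ⊗[k] U))).comp
    (TensorProduct.map (actV k V U) (act3 k V U))

variable {k U} in
/-- The product `∗ : U ⊗ U → U` induced by a bilinear map `mul`. -/
def m2 (mul : U →ₗ[k] U →ₗ[k] U) : U ⊗[k] U →ₗ[k] U := TensorProduct.lift mul

variable {k U} in
/-- `a ⊗ (b ⊗ c) ↦ a ∗ (b ∗ c)`. -/
def mR3 (mul : U →ₗ[k] U →ₗ[k] U) : U ⊗[k] (U ⊗[k] U) →ₗ[k] U :=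
  (m2 mul).comp (TensorProduct.map LinearMap.id (m2 mul))

variable {k U} in
/-- `a ⊗ (b ⊗ c) ↦ (a ∗ b) ∗ c`. -/
def mL3 (mul : U →ₗ[k] U →ₗ[k] U) : U ⊗[k] (U ⊗[k] U) →ₗ[k] U :=
  (m2 mul).comp ((TensorProduct.map (m2 mul) LinearMap.id).comp
    (TensorProduct.assoc k U U U).symm.toLinearMap)

variable {k U} in
/-- `a ⊗ (b ⊗ (c ⊗ d)) ↦ ((a ∗ b) ∗ c) ∗ d`. -/
def mL4 (mul : U →ₗ[k] U →ₗ[k] U) : U ⊗[k] (U ⊗[k] (U ⊗[k] U)) →ₗ[k] U :=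
  (mL3 mul).comp ((TensorProduct.map (m2 mul) LinearMap.id).comp
    (TensorProduct.assoc k U U (U ⊗[k] U)).symm.toLinearMap)

open TensorProduct

section TensorAct

variable {R A B C M N P : Type*} [CommRing R]
  [AddCommGroup A] [Module R A] [AddCommGroup B] [Module R B] [AddCommGroup C] [Module R C]
  [AddCommGroup M] [Module R M] [AddCommGroup N] [Module R N] [AddCommGroup P] [Module R P]

-- `act2`, `act3` and `act4` are, definitionally, iterates of this construction.
def tensorAct (f : A →ₗ[R] Module.End R M) (g : B →ₗ[R] Module.End R N) :
    A ⊗[R] B →ₗ[R] Module.End R (M ⊗[R] N) :=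
  (homTensorHomMap (RingHom.id R) M N M N).comp (map f g)

@[simp]
theorem tensorAct_tmul (f : A →ₗ[R] Module.End R M) (g : B →ₗ[R] Module.End R N) (a : A)
    (b : B) : tensorAct f g (a ⊗ₜ b) = map (f a) (g b) := by
  simp [tensorAct]

theorem tensorAct_assoc (f : A →ₗ[R] Module.End R M) (g : B →ₗ[R] Module.End R N)
    (h : C →ₗ[R] Module.End R P) (z : A ⊗[R] B) (c : C) :
    tensorAct f (tensorAct g h) (TensorProduct.assoc R A B C (z ⊗ₜ c)) =
      (TensorProduct.assoc R M N P).toLinearMap ∘ₗ map (tensorAct f g z) (h c) ∘ₗ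
        (TensorProduct.assoc R M N P).symm.toLinearMap := by
  induction z using TensorProduct.induction_on with
  | zero => simp
  | tmul a b => ext; simp
  | add z₁ z₂ h₁ h₂ =>
    simp only [add_tmul, map_add, h₁, h₂, map_add_left, LinearMap.add_comp, LinearMap.comp_add]

theorem tensorAct_mul {A B : Type*} [Ring A] [Algebra R A] [Ring B] [Algebra R B]
    {f : A →ₗ[R] Module.End R M} {g : B →ₗ[R] Module.End R N}
    (hf : ∀ a a', f (a * a') = f a * f a') (hg : ∀ b b', g (b * b') = g b * g b')
    (x y : A ⊗[R] B) : tensorAct f g (x * y) = tensorAct f g x * tensorAct f g y := by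
  induction x using TensorProduct.induction_on with
  | zero => simp
  | add x₁ x₂ h₁ h₂ => simp only [add_mul, map_add, h₁, h₂]
  | tmul a b =>
    induction y using TensorProduct.induction_on with
    | zero => simp
    | add y₁ y₂ h₁ h₂ => simp only [mul_add, map_add, h₁, h₂]
    | tmul a' b' => simp [hf, hg, TensorProduct.map_mul]

end TensorAct

section Quasiassociativity

variable {k V U : Type*} [Field k] [Ring V] [Algebra k V]
  [AddCommGroup U] [Module k U] [Module V U] [IsScalarTower k V U] [SMulCommClass k V U]

theorem deltaFirst_tmul (Δ : V →ₐ[k] V ⊗[k] V) (v : V) (y : V ⊗[k] V) :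
    deltaFirst k V Δ (v ⊗ₜ y) = TensorProduct.assoc k V V (V ⊗[k] V) (Δ v ⊗ₜ y) := by
  simp [deltaFirst]
  rfl

theorem deltaSecond_tmul (Δ : V →ₐ[k] V ⊗[k] V) (v w u : V) :
    deltaSecond k V Δ (v ⊗ₜ (w ⊗ₜ u)) = v ⊗ₜ TensorProduct.assoc k V V V (Δ w ⊗ₜ u) := by
  simp [deltaSecond]
  rfl

theorem deltaThird_tmul (Δ : V →ₐ[k] V ⊗[k] V) (v w u : V) :
    deltaThird k V Δ (v ⊗ₜ (w ⊗ₜ u)) = v ⊗ₜ (w ⊗ₜ Δ u) := by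
  simp [deltaThird]

theorem tensorOne_tmul (v w u : V) :
    tensorOne k V (v ⊗ₜ (w ⊗ₜ u)) = v ⊗ₜ (w ⊗ₜ (u ⊗ₜ 1)) := by
  simp [tensorOne]

theorem oneTensor_apply (x : V ⊗[k] (V ⊗[k] V)) : oneTensor k V x = 1 ⊗ₜ x := rfl

@[simp]
theorem actV_apply (v : V) (u : U) : actV k V U v u = v • u := rfl

theorem actV_one : actV k V U 1 = 1 := LinearMap.ext fun u => one_smul V u

theorem actV_mul (v w : V) : actV k V U (v * w) = actV k V U v * actV k V U w :=
  LinearMap.ext fun u => mul_smul v w u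

@[simp]
theorem act2_tmul (v w : V) : act2 k V U (v ⊗ₜ w) = map (actV k V U v) (actV k V U w) :=
  tensorAct_tmul _ _ v w

@[simp]
theorem act3_tmul (v : V) (y : V ⊗[k] V) :
    act3 k V U (v ⊗ₜ y) = map (actV k V U v) (act2 k V U y) :=
  tensorAct_tmul _ _ v y

@[simp]
theorem act4_tmul (v : V) (y : V ⊗[k] (V ⊗[k] V)) :
    act4 k V U (v ⊗ₜ y) = map (actV k V U v) (act3 k V U y) :=
  tensorAct_tmul _ _ v y

theorem act3_assoc_tmul (z : V ⊗[k] V) (u : V) :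
    act3 k V U (TensorProduct.assoc k V V V (z ⊗ₜ u)) =
      (TensorProduct.assoc k U U U).toLinearMap ∘ₗ map (act2 k V U z) (actV k V U u) ∘ₗ
        (TensorProduct.assoc k U U U).symm.toLinearMap :=
  tensorAct_assoc _ _ _ z u

theorem act4_assoc_tmul (z y : V ⊗[k] V) :
    act4 k V U (TensorProduct.assoc k V V (V ⊗[k] V) (z ⊗ₜ y)) =
      (TensorProduct.assoc k U U (U ⊗[k] U)).toLinearMap ∘ₗ map (act2 k V U z) (act2 k V U y) ∘ₗ
        (TensorProduct.assoc k U U (U ⊗[k] U)).symm.toLinearMap :=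
  tensorAct_assoc _ _ _ z y

theorem act2_mul (x y : V ⊗[k] V) : act2 k V U (x * y) = act2 k V U x * act2 k V U y :=
  tensorAct_mul actV_mul actV_mul x y

theorem act3_mul (x y : V ⊗[k] (V ⊗[k] V)) :
    act3 k V U (x * y) = act3 k V U x * act3 k V U y :=
  tensorAct_mul actV_mul act2_mul x y

theorem act4_mul (x y : V ⊗[k] (V ⊗[k] (V ⊗[k] V))) :
    act4 k V U (x * y) = act4 k V U x * act4 k V U y :=
  tensorAct_mul actV_mul act3_mul x y

@[simp]
theorem m2_tmul (mul : U →ₗ[k] U →ₗ[k] U) (a b : U) : m2 mul (a ⊗ₜ b) = mul a b := rfl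

def mul12 (mul : U →ₗ[k] U →ₗ[k] U) : U ⊗[k] (U ⊗[k] (U ⊗[k] U)) →ₗ[k] U ⊗[k] (U ⊗[k] U) :=
  map (m2 mul) LinearMap.id ∘ₗ (TensorProduct.assoc k U U (U ⊗[k] U)).symm.toLinearMap

def mul23 (mul : U →ₗ[k] U →ₗ[k] U) : U ⊗[k] (U ⊗[k] (U ⊗[k] U)) →ₗ[k] U ⊗[k] (U ⊗[k] U) :=
  map LinearMap.id (map (m2 mul) LinearMap.id ∘ₗ (TensorProduct.assoc k U U U).symm.toLinearMap)

def mul34 (mul : U →ₗ[k] U →ₗ[k] U) : U ⊗[k] (U ⊗[k] (U ⊗[k] U)) →ₗ[k] U ⊗[k] (U ⊗[k] U) :=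
  map LinearMap.id (map LinearMap.id (m2 mul))

@[simp]
theorem mul12_tmul (mul : U →ₗ[k] U →ₗ[k] U) (a b c d : U) :
    mul12 mul (a ⊗ₜ (b ⊗ₜ (c ⊗ₜ d))) = mul a b ⊗ₜ (c ⊗ₜ d) := rfl

@[simp]
theorem mul23_tmul (mul : U →ₗ[k] U →ₗ[k] U) (a b c d : U) :
    mul23 mul (a ⊗ₜ (b ⊗ₜ (c ⊗ₜ d))) = a ⊗ₜ (mul b c ⊗ₜ d) := rfl

@[simp]
theorem mul34_tmul (mul : U →ₗ[k] U →ₗ[k] U) (a b c d : U) :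
    mul34 mul (a ⊗ₜ (b ⊗ₜ (c ⊗ₜ d))) = a ⊗ₜ (b ⊗ₜ mul c d) := rfl

def IsModuleAlgebraMul (Δ : V →ₐ[k] V ⊗[k] V) (mul : U →ₗ[k] U →ₗ[k] U) : Prop :=
  ∀ (v : V) (x : U ⊗[k] U), v • m2 mul x = m2 mul (act2 k V U (Δ v) x)

theorem IsModuleAlgebraMul.m2_act2 {Δ : V →ₐ[k] V ⊗[k] V} {mul : U →ₗ[k] U →ₗ[k] U}
    (hΔ : IsModuleAlgebraMul Δ mul) (v : V) (x : U ⊗[k] U) :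
    m2 mul (act2 k V U (Δ v) x) = v • m2 mul x :=
  (hΔ v x).symm

variable {Δ : V →ₐ[k] V ⊗[k] V} {mul : U →ₗ[k] U →ₗ[k] U}

theorem mul34_act4_deltaThird (hΔ : IsModuleAlgebraMul Δ mul) (x : V ⊗[k] (V ⊗[k] V))
    (t : U ⊗[k] (U ⊗[k] (U ⊗[k] U))) :
    mul34 mul (act4 k V U (deltaThird k V Δ x) t) = act3 k V U x (mul34 mul t) := by
  suffices mul34 mul ∘ₗ act4 k V U (deltaThird k V Δ x) = act3 k V U x ∘ₗ mul34 mul from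
    LinearMap.congr_fun this t
  induction x using TensorProduct.induction_on with
  | zero => simp
  | add x y hx hy => simp only [map_add, LinearMap.comp_add, LinearMap.add_comp, hx, hy]
  | tmul v y =>
    induction y using TensorProduct.induction_on with
    | zero => simp
    | add y z hy hz =>
      simp only [tmul_add, map_add, LinearMap.comp_add, LinearMap.add_comp, hy, hz]
    | tmul w u =>
      ext a b c d
      simp [deltaThird_tmul, mul34, hΔ.m2_act2]

theorem mul12_act4_deltaFirst (hΔ : IsModuleAlgebraMul Δ mul) (x : V ⊗[k] (V ⊗[k] V))
    (t : U ⊗[k] (U ⊗[k] (U ⊗[k] U))) :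
    mul12 mul (act4 k V U (deltaFirst k V Δ x) t) = act3 k V U x (mul12 mul t) := by
  suffices mul12 mul ∘ₗ act4 k V U (deltaFirst k V Δ x) = act3 k V U x ∘ₗ mul12 mul from
    LinearMap.congr_fun this t
  induction x using TensorProduct.induction_on with
  | zero => simp
  | add x y hx hy => simp only [map_add, LinearMap.comp_add, LinearMap.add_comp, hx, hy]
  | tmul v y =>
    ext a b c d
    simp [deltaFirst_tmul, act4_assoc_tmul, mul12, hΔ.m2_act2]

theorem mul23_act4_deltaSecond (hΔ : IsModuleAlgebraMul Δ mul) (x : V ⊗[k] (V ⊗[k] V))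
    (t : U ⊗[k] (U ⊗[k] (U ⊗[k] U))) :
    mul23 mul (act4 k V U (deltaSecond k V Δ x) t) = act3 k V U x (mul23 mul t) := by
  suffices mul23 mul ∘ₗ act4 k V U (deltaSecond k V Δ x) = act3 k V U x ∘ₗ mul23 mul from
    LinearMap.congr_fun this t
  induction x using TensorProduct.induction_on with
  | zero => simp
  | add x y hx hy => simp only [map_add, LinearMap.comp_add, LinearMap.add_comp, hx, hy]
  | tmul v y =>
    induction y using TensorProduct.induction_on with
    | zero => simp
    | add y z hy hz =>
      simp only [tmul_add, map_add, LinearMap.comp_add, LinearMap.add_comp, hy, hz]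
    | tmul w u =>
      ext a b c d
      simp [deltaSecond_tmul, act3_assoc_tmul, mul23, hΔ.m2_act2]

def IsQuasiAssociative (Φ : V ⊗[k] (V ⊗[k] V)) (mul : U →ₗ[k] U →ₗ[k] U) : Prop :=
  ∀ t : U ⊗[k] (U ⊗[k] U), mR3 mul (act3 k V U Φ t) = mL3 mul t

def mR4 (mul : U →ₗ[k] U →ₗ[k] U) : U ⊗[k] (U ⊗[k] (U ⊗[k] U)) →ₗ[k] U :=
  mR3 mul ∘ₗ mul34 mul

def mulTripleLeft (mul : U →ₗ[k] U →ₗ[k] U) (f : U ⊗[k] (U ⊗[k] U) →ₗ[k] U) :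
    U ⊗[k] (U ⊗[k] (U ⊗[k] U)) →ₗ[k] U :=
  m2 mul ∘ₗ map f LinearMap.id ∘ₗ (TensorProduct.assoc k U (U ⊗[k] U) U).symm.toLinearMap ∘ₗ
    map LinearMap.id (TensorProduct.assoc k U U U).symm.toLinearMap

def mulTripleRight (mul : U →ₗ[k] U →ₗ[k] U) (f : U ⊗[k] (U ⊗[k] U) →ₗ[k] U) :
    U ⊗[k] (U ⊗[k] (U ⊗[k] U)) →ₗ[k] U :=
  m2 mul ∘ₗ map LinearMap.id f

@[simp]
theorem mulTripleLeft_tmul (mul : U →ₗ[k] U →ₗ[k] U) (f : U ⊗[k] (U ⊗[k] U) →ₗ[k] U)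
    (a b c d : U) : mulTripleLeft mul f (a ⊗ₜ (b ⊗ₜ (c ⊗ₜ d))) = mul (f (a ⊗ₜ (b ⊗ₜ c))) d :=
  rfl

@[simp]
theorem mulTripleRight_tmul (mul : U →ₗ[k] U →ₗ[k] U) (f : U ⊗[k] (U ⊗[k] U) →ₗ[k] U)
    (a b c d : U) : mulTripleRight mul f (a ⊗ₜ (b ⊗ₜ (c ⊗ₜ d))) = mul a (f (b ⊗ₜ (c ⊗ₜ d))) :=
  rfl

theorem mulTripleLeft_add (mul : U →ₗ[k] U →ₗ[k] U) (f g : U ⊗[k] (U ⊗[k] U) →ₗ[k] U) :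
    mulTripleLeft mul (f + g) = mulTripleLeft mul f + mulTripleLeft mul g := by
  simp only [mulTripleLeft, map_add_left, LinearMap.add_comp, LinearMap.comp_add]

theorem mulTripleLeft_act4_tensorOne (mul : U →ₗ[k] U →ₗ[k] U) (f : U ⊗[k] (U ⊗[k] U) →ₗ[k] U)
    (x : V ⊗[k] (V ⊗[k] V)) (t : U ⊗[k] (U ⊗[k] (U ⊗[k] U))) :
    mulTripleLeft mul f (act4 k V U (tensorOne k V x) t) =
      mulTripleLeft mul (f ∘ₗ act3 k V U x) t := by
  suffices mulTripleLeft mul f ∘ₗ act4 k V U (tensorOne k V x) =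
      mulTripleLeft mul (f ∘ₗ act3 k V U x) from LinearMap.congr_fun this t
  induction x using TensorProduct.induction_on with
  | zero => ext; simp [mulTripleLeft]
  | add x y hx hy =>
    simp only [map_add, LinearMap.comp_add, hx, hy, mulTripleLeft_add]
  | tmul v y =>
    induction y using TensorProduct.induction_on with
    | zero => ext; simp [mulTripleLeft]
    | add y z hy hz =>
      simp only [tmul_add, map_add, LinearMap.comp_add, hy, hz, mulTripleLeft_add]
    | tmul w u =>
      ext a b c d
      simp [tensorOne_tmul]

theorem mulTripleRight_act4_oneTensor (mul : U →ₗ[k] U →ₗ[k] U) (f : U ⊗[k] (U ⊗[k] U) →ₗ[k] U)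
    (x : V ⊗[k] (V ⊗[k] V)) (t : U ⊗[k] (U ⊗[k] (U ⊗[k] U))) :
    mulTripleRight mul f (act4 k V U (oneTensor k V x) t) =
      mulTripleRight mul (f ∘ₗ act3 k V U x) t := by
  simp [oneTensor_apply, mulTripleRight, actV_one, Module.End.one_eq_id, map_map]

theorem mR3_comp_mul12 (mul : U →ₗ[k] U →ₗ[k] U) :
    mR3 mul ∘ₗ mul12 mul = mL3 mul ∘ₗ mul34 mul := by
  ext; simp [mR3, mL3]

theorem mL4_eq_mulTripleLeft (mul : U →ₗ[k] U →ₗ[k] U) :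
    mL4 mul = mulTripleLeft mul (mL3 mul) := by
  ext; simp [mL4, mL3]

theorem mulTripleLeft_mR3 (mul : U →ₗ[k] U →ₗ[k] U) :
    mulTripleLeft mul (mR3 mul) = mL3 mul ∘ₗ mul23 mul := by
  ext; simp [mR3, mL3]

theorem mR3_comp_mul23 (mul : U →ₗ[k] U →ₗ[k] U) :
    mR3 mul ∘ₗ mul23 mul = mulTripleRight mul (mL3 mul) := by
  ext; simp [mR3, mL3]

theorem mulTripleRight_mR3 (mul : U →ₗ[k] U →ₗ[k] U) :
    mulTripleRight mul (mR3 mul) = mR4 mul := by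
  ext; simp [mR3, mR4]

theorem IsQuasiAssociative.mL3_eq {Φ : V ⊗[k] (V ⊗[k] V)} (hΦ : IsQuasiAssociative Φ mul) :
    mL3 mul = mR3 mul ∘ₗ act3 k V U Φ :=
  LinearMap.ext fun t => (hΦ t).symm

theorem mL4_eq_mR4_act4_deltaThird_mul_deltaFirst (hΔ : IsModuleAlgebraMul Δ mul)
    {Φ : V ⊗[k] (V ⊗[k] V)} (hΦ : IsQuasiAssociative Φ mul) (t : U ⊗[k] (U ⊗[k] (U ⊗[k] U))) :
    mL4 mul t = mR4 mul (act4 k V U (deltaThird k V Δ Φ * deltaFirst k V Δ Φ) t) := by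
  set s := act4 k V U (deltaFirst k V Δ Φ) t
  calc mL4 mul t = mR3 mul (act3 k V U Φ (mul12 mul t)) := (hΦ _).symm
    _ = mL3 mul (mul34 mul s) := by
      rw [← mul12_act4_deltaFirst hΔ, ← LinearMap.comp_apply, mR3_comp_mul12]; rfl
    _ = mR3 mul (mul34 mul (act4 k V U (deltaThird k V Δ Φ) s)) := by
      rw [← hΦ, mul34_act4_deltaThird hΔ]
    _ = mR4 mul (act4 k V U (deltaThird k V Δ Φ * deltaFirst k V Δ Φ) t) := by
      rw [act4_mul]; rfl

theorem mL4_eq_mR4_act4_oneTensor_mul_deltaSecond_mul_tensorOne (hΔ : IsModuleAlgebraMul Δ mul)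
    {Φ : V ⊗[k] (V ⊗[k] V)} (hΦ : IsQuasiAssociative Φ mul) (t : U ⊗[k] (U ⊗[k] (U ⊗[k] U))) :
    mL4 mul t = mR4 mul
      (act4 k V U (oneTensor k V Φ * deltaSecond k V Δ Φ * tensorOne k V Φ) t) := by
  set s := act4 k V U (tensorOne k V Φ) t
  calc mL4 mul t = mulTripleLeft mul (mR3 mul ∘ₗ act3 k V U Φ) t := by
        rw [mL4_eq_mulTripleLeft, hΦ.mL3_eq]
    _ = mL3 mul (mul23 mul s) := by
      rw [← mulTripleLeft_act4_tensorOne, mulTripleLeft_mR3]; rfl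
    _ = mR3 mul (mul23 mul (act4 k V U (deltaSecond k V Δ Φ) s)) := by
      rw [← hΦ, mul23_act4_deltaSecond hΔ]
    _ = mulTripleRight mul (mR3 mul ∘ₗ act3 k V U Φ) (act4 k V U (deltaSecond k V Δ Φ) s) := by
      rw [← hΦ.mL3_eq, ← mR3_comp_mul23]; rfl
    _ = mR4 mul (act4 k V U (oneTensor k V Φ * deltaSecond k V Δ Φ * tensorOne k V Φ) t) := by
      rw [← mulTripleRight_act4_oneTensor, mulTripleRight_mR3, act4_mul, act4_mul]; rfl

end Quasiassociativity

/-- Let `U` be a module over a unital bialgebra `V` (with `Δ` an algebra map, not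
necessarily coassociative), `Φ ∈ V^⊗3` invertible, and `∗` a `V`-module algebra
product on `U` satisfying `Φ·(a∗(b∗c)) = (a∗b)∗c`.  Then
`((a∗b)∗c)∗d = P(Φ)·(((a∗b)∗c)∗d)` for all `a,b,c,d ∈ U`, where `P(Φ) ∈ V^⊗4`
acts componentwise on the four tensor factors. -/
theorem quasiassoc_four_fold (Δ : V →ₐ[k] V ⊗[k] V)
    (Φ : (V ⊗[k] (V ⊗[k] V))ˣ) (mul : U →ₗ[k] U →ₗ[k] U)
    (hmodalg : ∀ (v : V) (x : U ⊗[k] U), v • m2 mul x = m2 mul (act2 k V U (Δ v) x))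
    (hPhi : ∀ t : U ⊗[k] (U ⊗[k] U),
      mR3 mul (act3 k V U (Φ : V ⊗[k] (V ⊗[k] V)) t) = mL3 mul t) :
    ∀ t : U ⊗[k] (U ⊗[k] (U ⊗[k] U)),
      mL4 mul t =
        mL4 mul (act4 k V U ((Pphi k V Δ Φ : (V ⊗[k] (V ⊗[k] (V ⊗[k] V)))ˣ) : _) t) := by
  intro t
  set B := Units.map (oneTensor k V).toRingHom.toMonoidHom Φ *
    Units.map (deltaSecond k V Δ).toRingHom.toMonoidHom Φ *
    Units.map (tensorOne k V).toRingHom.toMonoidHom Φ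
  have hB : B * Pphi k V Δ Φ = Units.map (deltaThird k V Δ).toRingHom.toMonoidHom Φ *
      Units.map (deltaFirst k V Δ).toRingHom.toMonoidHom Φ := by
    simp only [B, Pphi, mul_assoc, mul_inv_cancel_left]
  calc mL4 mul t
      = mR4 mul (act4 k V U (deltaThird k V Δ Φ * deltaFirst k V Δ Φ) t) :=
      mL4_eq_mR4_act4_deltaThird_mul_deltaFirst hmodalg hPhi t
    _ = mR4 mul (act4 k V U (B : V ⊗[k] (V ⊗[k] (V ⊗[k] V))) (act4 k V U (Pphi k V Δ Φ) t)) := by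
      rw [← Module.End.mul_apply, ← act4_mul, ← Units.val_mul, hB]; rfl
    _ = mL4 mul (act4 k V U (Pphi k V Δ Φ) t) :=
      (mL4_eq_mR4_act4_oneTensor_mul_deltaSecond_mul_tensorOne hmodalg hPhi _).symm

end
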